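/- For every n ≥ 1 and d ≥ 1, the square Vandermonde matrix V_{≤n}(A(n,d)) of the scaled principal lattice A(n,d) = { γ ∈ ℤ_{≥0}^d : γ_1 + ⋯ + γ_d ≤ n } is invertible; equivalently, for every data vector indexed by A(n,d) there is a unique polynomial in d variables of total degree ≤ n interpolating the data at the points of A(n,d). -/
import Mathlib


open scoped BigOperators

/-- The finite set of multi-indices `α : Fin d → ℕ` with total degree `|α| ≤ k`; viewed as
points of `ℝ^d` it is the scaled principal lattice `A(k,d)`. -/
def MIdx (d k : ℕ) : Finset (Fin d → ℕ) :=
  (Fintype.piFinset fun _ => Finset.range (k + 1)).filter fun α => ∑ i, α i ≤ k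

/-- The square Vandermonde matrix `V_{≤n}(A(n,d))` of the scaled principal lattice: rows
are indexed by the lattice points `γ ∈ A(n,d)` and columns by the multi-indices
`α ∈ ℙ_n`. -/
noncomputable def latticeVdM (d n : ℕ) : Matrix ↥(MIdx d n) ↥(MIdx d n) ℝ :=
  fun γ α => ∏ j, (γ.1 j : ℝ) ^ α.1 j

open Finset Matrix MvPolynomial

lemma mem_MIdx_iff {d n : ℕ} {α : Fin d → ℕ} : α ∈ MIdx d n ↔ ∑ i, α i ≤ n := by
  constructor
  · intro h; exact (Finset.mem_filter.mp h).2
  · intro h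
    refine Finset.mem_filter.mpr ⟨Fintype.mem_piFinset.mpr fun j => ?_, h⟩
    have : α j ≤ ∑ i, α i := Finset.single_le_sum (fun i _ => Nat.zero_le _) (Finset.mem_univ j)
    exact Finset.mem_range.mpr (Nat.lt_succ_of_le (this.trans h))

noncomputable def tf {d : ℕ} (α : Fin d → ℕ) : Fin d →₀ ℕ := Finsupp.equivFunOnFinite.symm α

@[simp] lemma tf_apply {d : ℕ} (α : Fin d → ℕ) (j : Fin d) : tf α j = α j := rfl

lemma prod_cast_sub_descFactorial (g m : ℕ) :
    ∏ k ∈ Finset.range m, ((g : ℝ) - k) = (g.descFactorial m : ℝ) := by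
  induction m with
  | zero => simp
  | succ m ih =>
    rw [Finset.prod_range_succ, ih, Nat.descFactorial_succ]
    rcases le_or_gt m g with h | h
    · push_cast [h]; ring
    · have h0 : g.descFactorial m = 0 := Nat.descFactorial_eq_zero_iff_lt.mpr h
      simp [h0]

lemma support_subset_MIdx {d n : ℕ} {r : MvPolynomial (Fin d) ℝ} (hr : r.totalDegree ≤ n) :
    r.support ⊆ (MIdx d n).image (fun f : Fin d → ℕ => (Finsupp.equivFunOnFinite.symm f : Fin d →₀ ℕ)) := by
  intro m hm
  refine Finset.mem_image.mpr ⟨Finsupp.equivFunOnFinite m, ?_, by simp⟩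
  refine mem_MIdx_iff.mpr ?_
  have h1 : (m.sum fun _ e => e) ≤ n := le_trans (MvPolynomial.le_totalDegree hm) hr
  have h2 : (m.sum fun _ e => e) = ∑ i, m i := Finsupp.sum_fintype _ _ (fun _ => rfl)
  simpa [h2] using h1

lemma eval_eq_sum_MIdx {d n : ℕ} {r : MvPolynomial (Fin d) ℝ} (hr : r.totalDegree ≤ n)
    (x : Fin d → ℝ) :
    MvPolynomial.eval x r = ∑ α ∈ MIdx d n, MvPolynomial.coeff (tf α) r * ∏ j, x j ^ α j := by
  rw [MvPolynomial.eval_eq']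
  rw [Finset.sum_subset (support_subset_MIdx hr)]
  · rw [Finset.sum_image (by intro a _ b _ h; exact Finsupp.equivFunOnFinite.symm.injective h)]
    refine Finset.sum_congr rfl fun α hα => ?_
    rfl
  · intro m _ hm
    simp [MvPolynomial.notMem_support_iff.mp hm]

noncomputable def Bpoly {d : ℕ} (α : Fin d → ℕ) : MvPolynomial (Fin d) ℝ :=
  ∏ j, ∏ k ∈ Finset.range (α j), (MvPolynomial.X j - MvPolynomial.C (k : ℝ))

lemma totalDegree_Bpoly {d n : ℕ} {α : Fin d → ℕ} (hα : α ∈ MIdx d n) :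
    (Bpoly α).totalDegree ≤ n := by
  refine le_trans (MvPolynomial.totalDegree_finset_prod _ _) ?_
  refine le_trans (Finset.sum_le_sum (fun j _ => MvPolynomial.totalDegree_finset_prod _ _)) ?_
  have h1 : ∀ (j : Fin d) (k : ℕ),
      (MvPolynomial.X (R := ℝ) j - MvPolynomial.C (k:ℝ)).totalDegree ≤ 1 := by
    intro j k
    have : MvPolynomial.X (R := ℝ) j - MvPolynomial.C (k:ℝ)
        = MvPolynomial.X j + MvPolynomial.C (-(k:ℝ)) := by
      rw [map_neg]; ring
    rw [this]
    refine le_trans (MvPolynomial.totalDegree_add _ _) (max_le (le_of_eq (MvPolynomial.totalDegree_X j)) ?_)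
    rw [MvPolynomial.totalDegree_C]
    exact Nat.zero_le 1
  have h2 : ∀ j : Fin d, ∑ k ∈ Finset.range (α j),
      (MvPolynomial.X (R := ℝ) j - MvPolynomial.C (k:ℝ)).totalDegree ≤ α j := by
    intro j
    have := Finset.sum_le_card_nsmul (Finset.range (α j))
      (fun k => (MvPolynomial.X (R := ℝ) j - MvPolynomial.C (k:ℝ)).totalDegree) 1
      (fun k _ => h1 j k)
    simpa using this
  exact le_trans (Finset.sum_le_sum fun j _ => h2 j) (mem_MIdx_iff.mp hα)

lemma eval_Bpoly {d : ℕ} (α γ : Fin d → ℕ) :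
    MvPolynomial.eval (fun j => (γ j : ℝ)) (Bpoly α)
      = ∏ j, ((γ j).descFactorial (α j) : ℝ) := by
  rw [Bpoly, map_prod]
  refine Finset.prod_congr rfl fun j _ => ?_
  rw [map_prod, ← prod_cast_sub_descFactorial]
  refine Finset.prod_congr rfl fun k _ => ?_
  simp

noncomputable def Nmat (d n : ℕ) : Matrix ↥(MIdx d n) ↥(MIdx d n) ℝ :=
  fun γ α => ∏ j, ((γ.1 j).descFactorial (α.1 j) : ℝ)

noncomputable def Cmat (d n : ℕ) : Matrix ↥(MIdx d n) ↥(MIdx d n) ℝ :=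
  fun α β => MvPolynomial.coeff (tf β.1) (Bpoly α.1)

lemma Nmat_eq (d n : ℕ) : Nmat d n = latticeVdM d n * (Cmat d n)ᵀ := by
  ext γ α
  rw [Matrix.mul_apply]
  have h := eval_eq_sum_MIdx (n := n) (totalDegree_Bpoly α.2) (fun j => (γ.1 j : ℝ))
  rw [eval_Bpoly α.1 γ.1] at h
  rw [show (Nmat d n γ α) = ∏ j, ((γ.1 j).descFactorial (α.1 j) : ℝ) from rfl, h,
    ← Finset.sum_coe_sort (MIdx d n)]
  refine Finset.sum_congr rfl fun β _ => ?_
  show coeff (tf β.1) (Bpoly α.1) * ∏ j, ((γ.1 j : ℝ)) ^ β.1 j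
      = (∏ j, ((γ.1 j : ℝ)) ^ β.1 j) * coeff (tf β.1) (Bpoly α.1)
  ring

lemma det_Nmat_ne_zero (d n : ℕ) : (Nmat d n).det ≠ 0 := by
  intro hdet
  obtain ⟨v, hv, hMv⟩ := (Matrix.exists_mulVec_eq_zero_iff).mpr hdet
  set S := Finset.univ.filter (fun α : ↥(MIdx d n) => v α ≠ 0) with hSdef
  have hS : S.Nonempty := by
    obtain ⟨a, ha⟩ := Function.ne_iff.mp hv
    exact ⟨a, Finset.mem_filter.mpr ⟨Finset.mem_univ a, by simpa using ha⟩⟩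
  obtain ⟨α₀, hα₀S, hmin⟩ := Finset.exists_min_image S (fun α => ∑ j, α.1 j) hS
  have hv0 : v α₀ ≠ 0 := by
    have := Finset.mem_filter.mp hα₀S
    simpa using this.2
  have h0 : Nmat d n α₀ α₀ * v α₀ = 0 := by
    have hrow : ∑ i, Nmat d n α₀ i * v i = 0 := by
      have h2 := congrFun hMv α₀
      simp only [Pi.zero_apply] at h2
      exact h2
    rw [← hrow]
    refine (Finset.sum_eq_single (f := fun α => Nmat d n α₀ α * v α) α₀ (fun α _ hne => ?_) (fun h => absurd (Finset.mem_univ α₀) h)).symm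
    by_cases hvα : v α = 0
    · show Nmat d n α₀ α * v α = 0
      rw [hvα, mul_zero]
    · have hαS : α ∈ S := Finset.mem_filter.mpr ⟨Finset.mem_univ _, hvα⟩
      by_cases hle : ∀ j, α.1 j ≤ α₀.1 j
      · exfalso
        have hne' : ∃ j, α.1 j ≠ α₀.1 j := by
          by_contra hc
          push_neg at hc
          exact hne (Subtype.ext (funext hc))
        obtain ⟨j, hj⟩ := hne'
        have hlt : ∑ i, α.1 i < ∑ i, α₀.1 i :=
          Finset.sum_lt_sum (fun i _ => hle i)
            ⟨j, Finset.mem_univ j, lt_of_le_of_ne (hle j) hj⟩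
        exact absurd (hmin α hαS) (not_le.mpr hlt)
      · push_neg at hle
        obtain ⟨j, hj⟩ := hle
        have hzero : ((α₀.1 j).descFactorial (α.1 j) : ℝ) = 0 :=
          Nat.cast_eq_zero.mpr (Nat.descFactorial_eq_zero_iff_lt.mpr hj)
        have hN : Nmat d n α₀ α = 0 := Finset.prod_eq_zero (Finset.mem_univ j) hzero
        show Nmat d n α₀ α * v α = 0
        rw [hN, zero_mul]
  rcases mul_eq_zero.mp h0 with h | h
  · refine absurd h ?_
    rw [Nmat]
    refine Finset.prod_ne_zero_iff.mpr fun j _ => ?_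
    exact Nat.cast_ne_zero.mpr (by rw [Nat.descFactorial_self]; exact (Nat.factorial_ne_zero _))
  · exact hv0 h

lemma det_latticeVdM_ne_zero (d n : ℕ) : (latticeVdM d n).det ≠ 0 := fun h =>
  det_Nmat_ne_zero d n (by rw [Nmat_eq, Matrix.det_mul, h, zero_mul])

lemma eval_interp {d n : ℕ} (x : Fin d → ℝ) (w : ↥(MIdx d n) → ℝ) :
    MvPolynomial.eval x (∑ α : ↥(MIdx d n), w α • MvPolynomial.monomial (tf α.1) (1:ℝ))
      = ∑ α : ↥(MIdx d n), w α * ∏ j, x j ^ α.1 j := by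
  rw [map_sum]
  refine Finset.sum_congr rfl fun α _ => ?_
  rw [MvPolynomial.smul_eq_C_mul, _root_.map_mul, MvPolynomial.eval_C, MvPolynomial.eval_monomial]
  rw [Finsupp.prod_fintype _ _ (fun j => pow_zero (x j))]
  simp [tf]

lemma totalDegree_interp_le {d n : ℕ} (w : ↥(MIdx d n) → ℝ) :
    (∑ α : ↥(MIdx d n), w α • MvPolynomial.monomial (tf α.1) (1:ℝ)).totalDegree ≤ n := by
  refine le_trans (MvPolynomial.totalDegree_finset_sum _ _) (Finset.sup_le fun α _ => ?_)
  refine le_trans (MvPolynomial.totalDegree_smul_le _ _) ?_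
  refine le_trans (le_of_eq (MvPolynomial.totalDegree_monomial _ one_ne_zero)) ?_
  rw [Finsupp.sum_fintype _ _ (fun j => rfl)]
  exact le_trans (le_of_eq (Finset.sum_congr rfl fun j _ => rfl)) (mem_MIdx_iff.mp α.2)

lemma vanish_eq_zero {d n : ℕ} (r : MvPolynomial (Fin d) ℝ) (hdeg : r.totalDegree ≤ n)
    (hz : ∀ γ : ↥(MIdx d n), MvPolynomial.eval (fun j => (γ.1 j : ℝ)) r = 0) : r = 0 := by
  set w : ↥(MIdx d n) → ℝ := fun α => MvPolynomial.coeff (tf α.1) r with hwdef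
  have hw : (latticeVdM d n).mulVec w = 0 := by
    funext γ
    have h := eval_eq_sum_MIdx (n := n) hdeg (fun j => (γ.1 j : ℝ))
    rw [hz γ] at h
    rw [← Finset.sum_coe_sort (MIdx d n)
      (fun α => MvPolynomial.coeff (tf α) r * ∏ j, ((γ.1 j : ℝ)) ^ α j)] at h
    show ∑ α : ↥(MIdx d n), latticeVdM d n γ α * w α = 0
    rw [← h.symm]
    exact Finset.sum_congr rfl fun α _ => by rw [latticeVdM, hwdef]; ring
  have hw0 : w = 0 := by
    by_contra hne
    exact det_latticeVdM_ne_zero d n ((Matrix.exists_mulVec_eq_zero_iff).mp ⟨w, hne, hw⟩)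
  ext m
  rw [MvPolynomial.coeff_zero]
  by_cases hm : m ∈ r.support
  · obtain ⟨f, hf, hfm⟩ := Finset.mem_image.mp (support_subset_MIdx hdeg hm)
    have h1 : w ⟨f, hf⟩ = 0 := congrFun hw0 _
    rw [hwdef] at h1
    rw [← hfm]
    exact h1
  · exact MvPolynomial.notMem_support_iff.mp hm


/-- For every `n ≥ 1` and `d ≥ 1`, the square Vandermonde matrix
`V_{≤n}(A(n,d))` of the scaled principal lattice `A(n,d) = {γ ∈ ℤ_{≥0}^d : Σγ ≤ n}` is
invertible; equivalently, every data vector indexed by `A(n,d)` admits a unique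
interpolating polynomial in `d` variables of total degree `≤ n`. -/
theorem principal_lattice_vandermonde_invertible {d n : ℕ} (hd : 1 ≤ d) (hn : 1 ≤ n) :
    (latticeVdM d n).det ≠ 0 ∧
    ∀ y : ↥(MIdx d n) → ℝ, ∃! p : MvPolynomial (Fin d) ℝ,
      p.totalDegree ≤ n ∧
      ∀ γ : ↥(MIdx d n), MvPolynomial.eval (fun j => (γ.1 j : ℝ)) p = y γ := by
  have hdet := det_latticeVdM_ne_zero d n
  refine ⟨hdet, fun y => ?_⟩
  have hunit : IsUnit (latticeVdM d n).det := isUnit_iff_ne_zero.mpr hdet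
  set c := (latticeVdM d n)⁻¹.mulVec y with hc
  refine ⟨∑ α : ↥(MIdx d n), c α • MvPolynomial.monomial (tf α.1) (1:ℝ),
    ⟨totalDegree_interp_le c, fun γ => ?_⟩, fun q hq => ?_⟩
  · rw [eval_interp]
    have h1 : (latticeVdM d n).mulVec c = y := by
      rw [hc, Matrix.mulVec_mulVec, Matrix.mul_nonsing_inv _ hunit, Matrix.one_mulVec]
    have h2 := congrFun h1 γ
    rw [← h2]
    show ∑ α : ↥(MIdx d n), c α * ∏ j, ((γ.1 j : ℝ)) ^ α.1 j
        = ∑ α : ↥(MIdx d n), latticeVdM d n γ α * c α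
    exact Finset.sum_congr rfl fun α _ => mul_comm _ _
  · have hdiff : q - (∑ α : ↥(MIdx d n), c α • MvPolynomial.monomial (tf α.1) (1:ℝ)) = 0 := by
      refine vanish_eq_zero (n := n) _ ?_ ?_
      · rw [sub_eq_add_neg]
        refine le_trans (MvPolynomial.totalDegree_add _ _) (max_le hq.1 ?_)
        rw [MvPolynomial.totalDegree_neg]
        exact totalDegree_interp_le c
      · intro γ
        rw [map_sub, hq.2 γ, eval_interp]
        have h1 : (latticeVdM d n).mulVec c = y := by
          rw [hc, Matrix.mulVec_mulVec, Matrix.mul_nonsing_inv _ hunit, Matrix.one_mulVec]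
        have h3 : ∑ α : ↥(MIdx d n), c α * ∏ j, ((γ.1 j : ℝ)) ^ α.1 j = y γ := by
          rw [← congrFun h1 γ]
          show ∑ α : ↥(MIdx d n), c α * ∏ j, ((γ.1 j : ℝ)) ^ α.1 j
              = ∑ α : ↥(MIdx d n), latticeVdM d n γ α * c α
          exact Finset.sum_congr rfl fun α _ => mul_comm _ _
        rw [h3, sub_self]
    exact sub_eq_zero.mp hdiff
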